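/- arXiv:2411.02277 — 2 statements merged into one kernel-verified Lean document; each statement's English description precedes it below -/
import Mathlib

section
/- Lemma 3.2(e): for every α ∈ (0,1), every partition 0 = t_0 < ⋯ < t_N = T, every β ∈ (0,1), and every 1 ≤ n ≤ N, one has Σ_{j=1}^{n} P^{n,j}_α · t_j^{β−α} ≤ (Γ(1+β−α)/Γ(1+β)) · t_n^β. -/
open Finset

/-- The kernel `k_β(s) = s^(β-1)/Γ(β)`. -/
noncomputable def kker (β s : ℝ) : ℝ := s ^ (β - 1) / Real.Gamma β

/-- The discrete L1 kernels `K^{n,j}_{1-α}`. -/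
noncomputable def Kd (α : ℝ) (t : ℕ → ℝ) (n j : ℕ) : ℝ :=
  (kker (2 - α) (t n - t (j - 1)) - kker (2 - α) (t n - t j)) / (t j - t (j - 1))

/-- The complementary discrete kernels `P^{n,i}_α`, defined by downward recursion. -/
noncomputable def Pd (α : ℝ) (t : ℕ → ℝ) (n i : ℕ) : ℝ :=
  if i = n then 1 / Kd α t n n
  else (1 / Kd α t i i) *
    ∑ j ∈ (Finset.Ioc i n).attach,
      Pd α t n j.1 * (Kd α t j.1 (i + 1) - Kd α t j.1 i)
termination_by n - i
decreasing_by
  have h := Finset.mem_Ioc.mp j.2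
  omega

/-!
By the Beta integral, `Γ(1+β)/Γ(1+β-α) · t_j^(β-α) = Γ(1-α)⁻¹ ∫₀^{t_j} (t_j - s)^(-α) d(s^β)`.
On each cell `[t_{k-1}, t_k]` the weight `(t_j - s)^(-α)` increases while the density
`β s^(β-1)` decreases, so by Chebyshev's integral inequality the cell contributes at most
`K^{j,k} (t_k^β - t_{k-1}^β)` to the right-hand side. The kernels `P^{n,j}` are nonnegative
(since `K^{j,k}` increases in `k`, by concavity of `s ↦ s^(1-α)`) and satisfy
`∑_{j=k}^n P^{n,j} K^{j,k} = 1` by their recursion. Multiplying by `P^{n,j}`, summing over `j`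
and exchanging the sums therefore leaves the telescoping sum `∑_k (t_k^β - t_{k-1}^β) = t_n^β`.
-/

section Analysis

open Set MeasureTheory intervalIntegral

theorem integral_rpow_mul_sub_rpow {p q a : ℝ} (hp : 0 < p) (hq : 0 < q) (ha : 0 < a) :
    ∫ s in (0 : ℝ)..a, s ^ (p - 1) * (a - s) ^ (q - 1)
      = Real.Gamma p * Real.Gamma q / Real.Gamma (p + q) * a ^ (p + q - 1) := by
  have h := Complex.betaIntegral_scaled p q ha
  rw [Complex.betaIntegral_eq_Gamma_mul_div _ _ (by simpa) (by simpa)] at h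
  apply Complex.ofReal_injective
  rw [← intervalIntegral.integral_ofReal, integral_congr fun s hs => ?_]
  · rw [h, mul_comm]
    push_cast [← Complex.Gamma_ofReal, Complex.ofReal_cpow ha.le]
    rfl
  · rw [Set.uIcc_of_le ha.le] at hs
    push_cast [Complex.ofReal_cpow hs.1, Complex.ofReal_cpow (sub_nonneg.2 hs.2)]
    rfl

theorem intervalIntegrable_rpow_mul_sub_rpow {p q a : ℝ} (hp : -1 < p) (hq : -1 < q)
    (ha : 0 < a) : IntervalIntegrable (fun s => s ^ p * (a - s) ^ q) volume 0 a := by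
  have hleft : IntervalIntegrable (fun s => s ^ p * (a - s) ^ q) volume 0 (a / 2) := by
    refine (intervalIntegrable_rpow' hp).mul_continuousOn
      (ContinuousOn.rpow_const (by fun_prop) fun s hs => Or.inl ?_)
    rw [Set.uIcc_of_le (by linarith)] at hs
    linarith [hs.2]
  have hright : IntervalIntegrable (fun s => s ^ p * (a - s) ^ q) volume (a / 2) a := by
    have h := (intervalIntegrable_rpow' (a := a - a / 2) (b := a - a) hq).comp_sub_left a
    simp only [sub_sub_cancel] at h
    refine h.continuousOn_mul (ContinuousOn.rpow_const (by fun_prop) fun s hs => Or.inl ?_)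
    rw [Set.uIcc_of_le (by linarith)] at hs
    linarith [hs.1]
  exact hleft.trans hright

-- Chebyshev's integral inequality, in the case where `f` attains its mean value at `ξ`.
theorem integral_mul_le_of_antitoneOn_of_monotoneOn {f g : ℝ → ℝ} {a b ξ : ℝ}
    (hab : a ≤ b) (hf : AntitoneOn f (Ioo a b)) (hg : MonotoneOn g (Ioo a b))
    (hξ : ξ ∈ Ioo a b) (hfξ : ∫ s in a..b, f s = (b - a) * f ξ)
    (hfi : IntervalIntegrable f volume a b) (hgi : IntervalIntegrable g volume a b)
    (hfgi : IntervalIntegrable (fun s => f s * g s) volume a b) :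
    ∫ s in a..b, f s * g s ≤ f ξ * ∫ s in a..b, g s := by
  have hpt : ∀ s ∈ Ioo a b, f s * g s ≤ f ξ * g s + g ξ * (f s - f ξ) := by
    intro s hs
    have : (f s - f ξ) * (g s - g ξ) ≤ 0 := by
      rcases le_total s ξ with h | h
      · exact mul_nonpos_of_nonneg_of_nonpos (sub_nonneg.2 (hf hs hξ h))
          (sub_nonpos.2 (hg hs hξ h))
      · exact mul_nonpos_of_nonpos_of_nonneg (sub_nonpos.2 (hf hξ hs h))
          (sub_nonneg.2 (hg hξ hs h))
    linarith
  have hfi' : IntervalIntegrable (fun s => g ξ * (f s - f ξ)) volume a b :=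
    (hfi.sub intervalIntegrable_const).const_mul _
  calc ∫ s in a..b, f s * g s
      ≤ ∫ s in a..b, (f ξ * g s + g ξ * (f s - f ξ)) := by
        refine integral_mono_ae_restrict hab hfgi ((hgi.const_mul _).add hfi') ?_
        rw [← Measure.restrict_congr_set Ioo_ae_eq_Icc]
        exact (ae_restrict_iff' measurableSet_Ioo).2 (ae_of_all _ hpt)
    _ = f ξ * ∫ s in a..b, g s := by
        rw [integral_add (hgi.const_mul _) hfi', intervalIntegral.integral_const_mul,
          intervalIntegral.integral_const_mul, integral_sub hfi intervalIntegrable_const,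
          intervalIntegral.integral_const, hfξ, smul_eq_mul, sub_self, mul_zero, add_zero]

variable {α β x : ℝ}

theorem integral_mul_rpow_mul_sub_rpow (hα1 : α < 1) (hβ0 : 0 < β) (hx : 0 < x) :
    ∫ s in (0 : ℝ)..x, β * s ^ (β - 1) * (x - s) ^ (-α)
      = Real.Gamma (1 - α) * (Real.Gamma (1 + β) / Real.Gamma (1 + β - α) * x ^ (β - α)) := by
  have h := integral_rpow_mul_sub_rpow hβ0 (q := 1 - α) (by linarith) hx
  rw [sub_sub_cancel_left, show β + (1 - α) - 1 = β - α by ring] at h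
  simp_rw [mul_assoc]
  rw [intervalIntegral.integral_const_mul, h, add_comm 1 β, Real.Gamma_add_one hβ0.ne',
    show β + 1 - α = β + (1 - α) by ring]
  ring

theorem intervalIntegrable_mul_rpow_mul_sub_rpow (hα1 : α < 1) (hβ0 : 0 < β) {a b : ℝ}
    (ha : 0 ≤ a) (hab : a ≤ b) (hbx : b ≤ x) :
    IntervalIntegrable (fun s => β * s ^ (β - 1) * (x - s) ^ (-α)) volume a b := by
  rcases hab.eq_or_lt with rfl | hab
  · exact .refl
  have hint := (intervalIntegrable_rpow_mul_sub_rpow (p := β - 1) (q := -α) (by linarith)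
    (by linarith) (ha.trans_lt (hab.trans_le hbx))).const_mul β
  simp only [mul_assoc]
  refine hint.mono_set ?_
  rw [Set.uIcc_of_le hab.le, Set.uIcc_of_le (by linarith)]
  exact Icc_subset_Icc ha hbx

theorem integral_mul_rpow_mul_sub_rpow_le (hα0 : 0 ≤ α) (hα1 : α < 1) (hβ0 : 0 < β)
    (hβ1 : β ≤ 1) {a b : ℝ} (ha : 0 ≤ a) (hab : a < b) (hbx : b ≤ x) :
    ∫ s in a..b, β * s ^ (β - 1) * (x - s) ^ (-α)
      ≤ (b ^ β - a ^ β) / (b - a) * (((x - a) ^ (1 - α) - (x - b) ^ (1 - α)) / (1 - α)) := by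
  obtain ⟨ξ, hξ, hslope⟩ := exists_hasDerivAt_eq_slope (fun s => s ^ β)
    (fun s => β * s ^ (β - 1)) hab (continuousOn_id.rpow_const fun _ _ => Or.inr hβ0.le)
    fun s hs => Real.hasDerivAt_rpow_const (Or.inl (ha.trans_lt hs.1).ne')
  have hdens : AntitoneOn (fun s : ℝ => β * s ^ (β - 1)) (Ioo a b) := fun s hs r hr hsr =>
    mul_le_mul_of_nonneg_left
      (Real.antitoneOn_rpow_Ioi_of_exponent_nonpos (by linarith) (ha.trans_lt hs.1)
        (ha.trans_lt hr.1) hsr) hβ0.le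
  have hweight : MonotoneOn (fun s : ℝ => (x - s) ^ (-α)) (Ioo a b) := fun s hs r hr hsr =>
    Real.antitoneOn_rpow_Ioi_of_exponent_nonpos (by linarith) (sub_pos.2 (hr.2.trans_le hbx))
      (sub_pos.2 (hs.2.trans_le hbx)) (by linarith)
  have hdensi : IntervalIntegrable (fun s : ℝ => β * s ^ (β - 1)) volume a b :=
    (intervalIntegrable_rpow' (by linarith)).const_mul β
  have hweighti : IntervalIntegrable (fun s : ℝ => (x - s) ^ (-α)) volume a b := by
    simpa using (intervalIntegrable_rpow' (a := x - a) (b := x - b) (r := -α)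
      (by linarith)).comp_sub_left x
  have hint_dens : ∫ s in a..b, β * s ^ (β - 1) = (b - a) * (β * ξ ^ (β - 1)) := by
    rw [intervalIntegral.integral_const_mul, integral_rpow (Or.inl (by linarith)),
      sub_add_cancel, mul_div_cancel₀ _ hβ0.ne', hslope, mul_div_cancel₀ _ (sub_pos.2 hab).ne']
  have hint_weight : ∫ s in a..b, (x - s) ^ (-α)
      = ((x - a) ^ (1 - α) - (x - b) ^ (1 - α)) / (1 - α) := by
    rw [intervalIntegral.integral_comp_sub_left (fun s => s ^ (-α)) x,
      integral_rpow (Or.inl (by linarith)), neg_add_eq_sub]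
  have h := integral_mul_le_of_antitoneOn_of_monotoneOn hab.le hdens hweight hξ hint_dens
    hdensi hweighti (intervalIntegrable_mul_rpow_mul_sub_rpow hα1 hβ0 ha hab.le hbx)
  rwa [hint_weight, hslope] at h

end Analysis

theorem Finset.sum_Icc_one_eq_sum_range {M : Type*} [AddCommMonoid M] (f : ℕ → M) (n : ℕ) :
    ∑ k ∈ Finset.Icc 1 n, f k = ∑ k ∈ Finset.range n, f (k + 1) := by
  rw [Finset.range_eq_Ico, Finset.sum_Ico_add', zero_add, Finset.Ico_add_one_right_eq_Icc]

section Partition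

variable {α β : ℝ} {t : ℕ → ℝ} {n j k : ℕ}

theorem Kd_eq_sub_rpow_div (α : ℝ) (t : ℕ → ℝ) (j k : ℕ) :
    Kd α t j k = ((t j - t (k - 1)) ^ (1 - α) - (t j - t k) ^ (1 - α))
      / (Real.Gamma (2 - α) * (t k - t (k - 1))) := by
  rw [Kd, kker, kker, show 2 - α - 1 = 1 - α by ring, div_sub_div_same, div_div]

theorem Kd_pos (ht : StrictMonoOn t (Set.Iic j)) (hα1 : α < 1) (hk : 1 ≤ k) (hkj : k ≤ j) :
    0 < Kd α t j k := by
  have hstep : t (k - 1) < t k :=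
    ht (Set.mem_Iic.2 (by omega)) (Set.mem_Iic.2 hkj) (by omega)
  rw [Kd_eq_sub_rpow_div]
  refine div_pos (sub_pos.2 (Real.rpow_lt_rpow ?_ (by linarith) (by linarith)))
    (mul_pos (Real.Gamma_pos_of_pos (by linarith)) (sub_pos.2 hstep))
  exact sub_nonneg.2 (ht.monotoneOn (Set.mem_Iic.2 hkj) Set.self_mem_Iic hkj)

theorem Kd_le_Kd_add_one (ht : StrictMonoOn t (Set.Iic j)) (hα0 : 0 ≤ α) (hα1 : α ≤ 1)
    (hk : 1 ≤ k) (hkj : k < j) : Kd α t j k ≤ Kd α t j (k + 1) := by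
  have hprev : t (k - 1) < t k := ht (Set.mem_Iic.2 (by omega)) (Set.mem_Iic.2 (by omega))
    (by omega)
  have hnext : t k < t (k + 1) := ht (Set.mem_Iic.2 (by omega)) (Set.mem_Iic.2 hkj) (by omega)
  have hlast : t (k + 1) ≤ t j := ht.monotoneOn (Set.mem_Iic.2 hkj) Set.self_mem_Iic hkj
  have hslope := (Real.concaveOn_rpow (by linarith : (0 : ℝ) ≤ 1 - α)
      (by linarith)).slope_anti_adjacent (x := t j - t (k + 1)) (y := t j - t k)
    (z := t j - t (k - 1)) (by simp; linarith) (by simp; linarith) (by linarith) (by linarith)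
  rw [Kd_eq_sub_rpow_div, Kd_eq_sub_rpow_div, Nat.add_sub_cancel, mul_comm,
    mul_comm (Real.Gamma _), ← div_div, ← div_div]
  gcongr ?_ / _
  · exact (Real.Gamma_pos_of_pos (by linarith)).le
  · convert hslope using 2 <;> ring

theorem Pd_self (α : ℝ) (t : ℕ → ℝ) (n : ℕ) : Pd α t n n = 1 / Kd α t n n := by
  rw [Pd, if_pos rfl]

theorem Pd_of_lt {i : ℕ} (h : i < n) :
    Pd α t n i = 1 / Kd α t i i *
      ∑ j ∈ Finset.Ioc i n, Pd α t n j * (Kd α t j (i + 1) - Kd α t j i) := by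
  rw [Pd, if_neg h.ne, Finset.sum_attach (Finset.Ioc i n)
    (fun j => Pd α t n j * (Kd α t j (i + 1) - Kd α t j i))]

theorem Pd_nonneg (ht : StrictMonoOn t (Set.Iic n)) (hα0 : 0 ≤ α) (hα1 : α < 1) {i : ℕ}
    (hi : 1 ≤ i) (hin : i ≤ n) : 0 ≤ Pd α t n i := by
  have hKii : 0 ≤ 1 / Kd α t i i :=
    one_div_nonneg.2 (Kd_pos (ht.mono (Set.Iic_subset_Iic.2 hin)) hα1 hi le_rfl).le
  rcases hin.eq_or_lt with rfl | hin
  · rwa [Pd_self]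
  rw [Pd_of_lt hin]
  refine mul_nonneg hKii (Finset.sum_nonneg fun j hj => ?_)
  obtain ⟨hij, hjn⟩ := Finset.mem_Ioc.1 hj
  exact mul_nonneg (Pd_nonneg ht hα0 hα1 (by omega) hjn) (sub_nonneg.2
    (Kd_le_Kd_add_one (ht.mono (Set.Iic_subset_Iic.2 hjn)) hα0 hα1.le hi hij))
termination_by n - i

theorem sum_Pd_mul_Kd (ht : StrictMonoOn t (Set.Iic n)) (hα1 : α < 1) {k : ℕ}
    (hk : 1 ≤ k) (hkn : k ≤ n) : ∑ j ∈ Finset.Icc k n, Pd α t n j * Kd α t j k = 1 := by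
  have hKkk : Kd α t k k ≠ 0 :=
    (Kd_pos (ht.mono (Set.Iic_subset_Iic.2 hkn)) hα1 hk le_rfl).ne'
  rcases hkn.eq_or_lt with rfl | hkn
  · rw [Finset.Icc_self, Finset.sum_singleton, Pd_self, one_div_mul_cancel hKkk]
  have hrest := sum_Pd_mul_Kd ht hα1 (by omega : 1 ≤ k + 1) hkn
  rw [← Finset.Ioc_insert_left hkn.le, Finset.sum_insert Finset.left_notMem_Ioc, Pd_of_lt hkn,
    mul_right_comm, one_div_mul_cancel hKkk, one_mul, ← Finset.sum_add_distrib,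
    ← Finset.Icc_add_one_left_eq_Ioc, ← hrest]
  exact Finset.sum_congr rfl fun j _ => by ring
termination_by n - k

theorem sum_Pd_mul_sum_Kd_mul (ht : StrictMonoOn t (Set.Iic n)) (hα1 : α < 1) (w : ℕ → ℝ) :
    ∑ j ∈ Finset.Icc 1 n, Pd α t n j * ∑ k ∈ Finset.Icc 1 j, Kd α t j k * w k
      = ∑ k ∈ Finset.Icc 1 n, w k := by
  simp_rw [Finset.mul_sum]
  rw [Finset.sum_comm' (t' := Finset.Icc 1 n) (s' := fun k => Finset.Icc k n)
    (fun j k => by simp only [Finset.mem_Icc]; omega)]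
  refine Finset.sum_congr rfl fun k hk => ?_
  obtain ⟨hk1, hkn⟩ := Finset.mem_Icc.1 hk
  simp_rw [← mul_assoc]
  rw [← Finset.sum_mul, sum_Pd_mul_Kd ht hα1 hk1 hkn, one_mul]

theorem integral_cell_le_Gamma_mul_Kd_mul (ht0 : t 0 = 0) (ht : StrictMonoOn t (Set.Iic j))
    (hα0 : 0 ≤ α) (hα1 : α < 1) (hβ0 : 0 < β) (hβ1 : β ≤ 1) (hkj : k < j) :
    ∫ s in t k..t (k + 1), β * s ^ (β - 1) * (t j - s) ^ (-α)
      ≤ Real.Gamma (1 - α) * (Kd α t j (k + 1) * (t (k + 1) ^ β - t k ^ β)) := by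
  have hstep : t k < t (k + 1) := ht (Set.mem_Iic.2 (by omega)) (Set.mem_Iic.2 hkj) (by omega)
  have htk : 0 ≤ t k := ht0 ▸ ht.monotoneOn (Set.mem_Iic.2 (Nat.zero_le j))
    (Set.mem_Iic.2 (by omega)) (Nat.zero_le k)
  refine (integral_mul_rpow_mul_sub_rpow_le hα0 hα1 hβ0 hβ1 htk hstep
    (ht.monotoneOn (Set.mem_Iic.2 hkj) Set.self_mem_Iic hkj)).trans_eq ?_
  have hΓ : Real.Gamma (2 - α) = (1 - α) * Real.Gamma (1 - α) := by
    rw [show 2 - α = (1 - α) + 1 by ring, Real.Gamma_add_one (by linarith)]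
  rw [Kd_eq_sub_rpow_div, Nat.add_sub_cancel, hΓ]
  field_simp [(sub_pos.2 hstep).ne', (Real.Gamma_pos_of_pos (by linarith : 0 < 1 - α)).ne']

theorem Gamma_div_Gamma_mul_rpow_le_sum_Kd (ht0 : t 0 = 0) (ht : StrictMonoOn t (Set.Iic j))
    (hα0 : 0 ≤ α) (hα1 : α < 1) (hβ0 : 0 < β) (hβ1 : β ≤ 1) (hj : 1 ≤ j) :
    Real.Gamma (1 + β) / Real.Gamma (1 + β - α) * t j ^ (β - α)
      ≤ ∑ k ∈ Finset.Icc 1 j, Kd α t j k * (t k ^ β - t (k - 1) ^ β) := by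
  have htj : 0 < t j := ht0 ▸ ht (Set.mem_Iic.2 (Nat.zero_le j)) Set.self_mem_Iic hj
  have hintegrable (k : ℕ) (hk : k < j) :
      IntervalIntegrable (fun s => β * s ^ (β - 1) * (t j - s) ^ (-α)) MeasureTheory.volume
        (t k) (t (k + 1)) :=
    intervalIntegrable_mul_rpow_mul_sub_rpow hα1 hβ0
      (ht0 ▸ ht.monotoneOn (Set.mem_Iic.2 (Nat.zero_le j)) (Set.mem_Iic.2 hk.le) (Nat.zero_le k))
      (ht.monotoneOn (Set.mem_Iic.2 hk.le) (Set.mem_Iic.2 hk) (by omega))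
      (ht.monotoneOn (Set.mem_Iic.2 hk) Set.self_mem_Iic hk)
  refine le_of_mul_le_mul_left ?_ (Real.Gamma_pos_of_pos (by linarith : 0 < 1 - α))
  calc Real.Gamma (1 - α) * (Real.Gamma (1 + β) / Real.Gamma (1 + β - α) * t j ^ (β - α))
      = ∑ k ∈ Finset.range j,
          ∫ s in t k..t (k + 1), β * s ^ (β - 1) * (t j - s) ^ (-α) := by
        rw [← integral_mul_rpow_mul_sub_rpow hα1 hβ0 htj,
          intervalIntegral.sum_integral_adjacent_intervals fun k hk => hintegrable k hk, ht0]
    _ ≤ ∑ k ∈ Finset.range j,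
          Real.Gamma (1 - α) * (Kd α t j (k + 1) * (t (k + 1) ^ β - t k ^ β)) :=
        Finset.sum_le_sum fun k hk => integral_cell_le_Gamma_mul_Kd_mul ht0 ht hα0 hα1 hβ0 hβ1
          (Finset.mem_range.1 hk)
    _ = Real.Gamma (1 - α) *
          ∑ k ∈ Finset.Icc 1 j, Kd α t j k * (t k ^ β - t (k - 1) ^ β) := by
        simp only [← Finset.mul_sum, Finset.sum_Icc_one_eq_sum_range, Nat.add_sub_cancel]

end Partition

theorem complementary_kernel_weighted_power_bound_general
    (α : ℝ) (N : ℕ) (t : ℕ → ℝ)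
    (hα0 : 0 < α) (hα1 : α < 1)
    (ht0 : t 0 = 0)
    (hmono : ∀ j, j < N → t j < t (j + 1)) :
    ∀ β : ℝ, 0 < β → β < 1 → ∀ n, 1 ≤ n → n ≤ N →
      ∑ j ∈ Finset.Icc 1 n, Pd α t n j * t j ^ (β - α)
        ≤ (Real.Gamma (1 + β - α) / Real.Gamma (1 + β)) * t n ^ β := by
  intro β hβ0 hβ1 n hn hnN
  have ht : StrictMonoOn t (Set.Iic n) :=
    (strictMonoOn_Iic_of_lt_succ fun m hm => hmono m (by omega)).mono (Set.Iic_subset_Iic.2 hnN)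
  set c := Real.Gamma (1 + β) / Real.Gamma (1 + β - α)
  have hc : 0 < c :=
    div_pos (Real.Gamma_pos_of_pos (by linarith)) (Real.Gamma_pos_of_pos (by linarith))
  rw [← inv_div, ← div_eq_inv_mul, le_div_iff₀' hc, Finset.mul_sum]
  calc ∑ j ∈ Finset.Icc 1 n, c * (Pd α t n j * t j ^ (β - α))
      ≤ ∑ j ∈ Finset.Icc 1 n, Pd α t n j *
          ∑ k ∈ Finset.Icc 1 j, Kd α t j k * (t k ^ β - t (k - 1) ^ β) := by
        refine Finset.sum_le_sum fun j hj => ?_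
        obtain ⟨hj1, hjn⟩ := Finset.mem_Icc.1 hj
        rw [mul_left_comm]
        exact mul_le_mul_of_nonneg_left (Gamma_div_Gamma_mul_rpow_le_sum_Kd ht0
          (ht.mono (Set.Iic_subset_Iic.2 hjn)) hα0.le hα1 hβ0 hβ1.le hj1)
          (Pd_nonneg ht hα0.le hα1 hj1 hjn)
    _ = t n ^ β := by
        rw [sum_Pd_mul_sum_Kd_mul ht hα1, Finset.sum_Icc_one_eq_sum_range]
        simp only [Nat.add_sub_cancel]
        rw [Finset.sum_range_sub (fun k => t k ^ β), ht0, Real.zero_rpow hβ0.ne', sub_zero]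

/-- Lemma 3.2(e): `Σ_{j=1}^{n} P^{n,j}_α t_j^{β-α} ≤ (Γ(1+β-α)/Γ(1+β)) t_n^β`
for every `β ∈ (0,1)` and `1 ≤ n ≤ N`. -/
theorem complementary_kernel_weighted_power_bound
    (α T : ℝ) (N : ℕ) (t : ℕ → ℝ)
    (hα0 : 0 < α) (hα1 : α < 1) (hT : 0 < T)
    (ht0 : t 0 = 0) (htN : t N = T)
    (hmono : ∀ j, j < N → t j < t (j + 1)) :
    ∀ β : ℝ, 0 < β → β < 1 → ∀ n, 1 ≤ n → n ≤ N →
      ∑ j ∈ Finset.Icc 1 n, Pd α t n j * t j ^ (β - α)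
        ≤ (Real.Gamma (1 + β - α) / Real.Gamma (1 + β)) * t n ^ β :=
  complementary_kernel_weighted_power_bound_general α N t hα0 hα1 ht0 hmono
end

section
/- Lemma 3.1, third estimate (pollution term): under the hypotheses of the weighted estimate, assume in addition that the family (B_j) is Lipschitz along the partition, i.e. there is L_B > 0 with ‖B_j − B_{j−1}‖_{op} ≤ L_B·Δt_j for 1 ≤ j ≤ N. Then for every sequence φ^0, …, φ^N in H and every 1 ≤ n ≤ N, (1/2) Σ_{j=1}^{n} K^{n,j}_{1−α}( ⟨B_jφ^j,φ^j⟩ − ⟨B_{j−1}φ^{j−1},φ^{j−1}⟩ ) ≤ ⟨ Σ_{j=1}^{n} K^{n,j}_{1−α}(B_jφ^j − B_{j−1}φ^{j−1}), φ^n ⟩ + (L_B t_n^{1−α} / (2β_0 Γ(2−α))) · ⟨B_nφ^n, φ^n⟩. -/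
open Finset

/-!
Write `Q_j(x) = ⟪B_j x, x⟫` and `K_j = K^{n,j}_{1-α}`. Concavity of `k_{2-α}` makes the weights
`K_j` nonnegative and nondecreasing in `j`, so summation by parts applied to
`f_j = Q_j(φ^j - φ^n) ≥ 0`, which vanishes at `j = n`, gives `∑ K_j (f_j - f_{j-1}) ≤ 0`.
Expanded, this is a discrete product rule:
`½ ∑ K_j (Q_j(φ^j) - Q_{j-1}(φ^{j-1}))`
`  ≤ ⟪∑ K_j (B_j φ^j - B_{j-1} φ^{j-1}), φ^n⟫ - ½ ∑ K_j (Q_j(φ^n) - Q_{j-1}(φ^n))`.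
The Lipschitz bound gives `Q_{j-1}(φ^n) - Q_j(φ^n) ≤ L_B Δt_j ‖φ^n‖²`, `∑ K_j Δt_j` telescopes
to `k_{2-α}(t_n) = t_n^{1-α}/Γ(2-α)`, and finally `‖φ^n‖² ≤ Q_n(φ^n)/β₀`.
-/

open RealInnerProductSpace

section SummationByParts

variable {R : Type*}

lemma Finset.sum_Icc_sub_telescope [AddCommGroup R] (G : ℕ → R) (n : ℕ) :
    ∑ j ∈ Icc 1 n, (G (j - 1) - G j) = G 0 - G n := by
  induction n with
  | zero => simp
  | succ n ih =>
    rw [sum_Icc_succ_top (by omega), ih, Nat.add_sub_cancel]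
    abel

lemma Finset.sum_Icc_mul_sub_le [CommRing R] [LinearOrder R] [IsStrictOrderedRing R]
    (K f : ℕ → R) {n : ℕ} (hn : 1 ≤ n) (hK : 0 ≤ K 1)
    (hKmono : ∀ j, 1 ≤ j → j < n → K j ≤ K (j + 1)) (hf : ∀ j < n, 0 ≤ f j) :
    ∑ j ∈ Icc 1 n, K j * (f j - f (j - 1)) ≤ K n * f n := by
  induction n, hn using Nat.le_induction with
  | base =>
    have := mul_nonneg hK (hf 0 one_pos)
    simp only [Icc_self, sum_singleton, Nat.sub_self]
    linarith [mul_sub (K 1) (f 1) (f 0)]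
  | succ m hm ih =>
    have hgap := mul_nonneg (sub_nonneg.2 (hKmono m hm (by omega))) (hf m (by omega))
    rw [sum_Icc_succ_top (by omega), Nat.add_sub_cancel]
    have := ih (fun j hj hjm => hKmono j hj (by omega)) (fun j hj => hf j (by omega))
    linarith [mul_sub (K (m + 1)) (f (m + 1)) (f m), sub_mul (K (m + 1)) (K m) (f m)]

end SummationByParts

section Kernels

lemma kker_zero {β : ℝ} (hβ : 1 < β) : kker β 0 = 0 := by
  simp [kker, Real.zero_rpow (by linarith : β - 1 ≠ 0)]

lemma kker_monotoneOn {β : ℝ} (hβ : 1 ≤ β) : MonotoneOn (kker β) (Set.Ici 0) :=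
  fun _ hx _ _ hxy => div_le_div_of_nonneg_right
    (Real.rpow_le_rpow hx hxy (by linarith)) (Real.Gamma_pos_of_pos (by linarith)).le

lemma kker_concaveOn {β : ℝ} (h1 : 1 ≤ β) (h2 : β ≤ 2) : ConcaveOn ℝ (Set.Ici 0) (kker β) := by
  have hΓ : 0 ≤ (Real.Gamma β)⁻¹ := (inv_pos.2 (Real.Gamma_pos_of_pos (by linarith))).le
  have hk : kker β = fun x => (Real.Gamma β)⁻¹ • x ^ (β - 1) := by
    funext x
    rw [kker, smul_eq_mul, div_eq_inv_mul]
  exact hk ▸ (Real.concaveOn_rpow (by linarith) (by linarith)).smul hΓ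

variable {α : ℝ} {t : ℕ → ℝ} {n j : ℕ}

lemma StrictMonoOn.sub_pred_pos (ht : StrictMonoOn t (Set.Iic n)) (hj : 1 ≤ j) (hjn : j ≤ n) :
    0 < t j - t (j - 1) :=
  sub_pos.2 <| ht (by simp; omega) (by simpa using hjn) (by omega)

lemma Kd_nonneg (hα : α ≤ 1) (ht : StrictMonoOn t (Set.Iic n)) (hj : 1 ≤ j) (hjn : j ≤ n) :
    0 ≤ Kd α t n j := by
  have hmono := ht.monotoneOn
  refine div_nonneg (sub_nonneg.2 <| kker_monotoneOn (by linarith) ?_ ?_ ?_)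
    (ht.sub_pred_pos hj hjn).le
  · simpa using hmono (by simpa using hjn) (by simp) hjn
  · simpa using hmono (by simp; omega) (by simp) (by omega : j - 1 ≤ n)
  · linarith [hmono (by simp; omega) (by simpa using hjn) (by omega : j - 1 ≤ j)]

lemma Kd_le_Kd_succ (hα0 : 0 ≤ α) (hα1 : α ≤ 1) (ht : StrictMonoOn t (Set.Iic n))
    (hj : 1 ≤ j) (hjn : j + 1 ≤ n) : Kd α t n j ≤ Kd α t n (j + 1) := by
  have hx : t n - t (j + 1) ∈ Set.Ici (0 : ℝ) := by
    simpa using ht.monotoneOn (by simpa using hjn) (by simp) hjn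
  have hz : t n - t (j - 1) ∈ Set.Ici (0 : ℝ) := by
    simpa using ht.monotoneOn (by simp; omega) (by simp) (by omega : j - 1 ≤ n)
  have hxy := ht.sub_pred_pos (by omega : 1 ≤ j + 1) hjn
  have hyz := ht.sub_pred_pos hj (by omega)
  rw [Nat.add_sub_cancel] at hxy
  have hs := (kker_concaveOn (β := 2 - α) (by linarith) (by linarith)).slope_anti_adjacent
    (y := t n - t j) hx hz (by linarith) (by linarith)
  simpa [Kd, sub_sub_sub_cancel_left] using hs

lemma sum_Kd_mul_sub (ht : StrictMonoOn t (Set.Iic n)) :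
    ∑ j ∈ Icc 1 n, Kd α t n j * (t j - t (j - 1)) = kker (2 - α) (t n - t 0) - kker (2 - α) 0 := by
  have hterm : ∀ j ∈ Icc 1 n, Kd α t n j * (t j - t (j - 1))
      = kker (2 - α) (t n - t (j - 1)) - kker (2 - α) (t n - t j) := fun j hj => by
    obtain ⟨hj1, hjn⟩ := mem_Icc.1 hj
    exact div_mul_cancel₀ _ (ht.sub_pred_pos hj1 hjn).ne'
  rw [sum_congr rfl hterm, sum_Icc_sub_telescope (fun i => kker (2 - α) (t n - t i)), sub_self]

end Kernels

section Operators

variable {E : Type*} [NormedAddCommGroup E] [InnerProductSpace ℝ E]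

lemma LinearMap.IsPositive.two_mul_inner_le {T : E →ₗ[ℝ] E} (hT : T.IsPositive) (x y : E) :
    2 * ⟪T x, y⟫ ≤ ⟪T x, x⟫ + ⟪T y, y⟫ := by
  have h := hT.inner_nonneg_left (x - y)
  have hsymm : ⟪T y, x⟫ = ⟪T x, y⟫ := by rw [hT.isSymmetric y x, real_inner_comm]
  simp only [map_sub, inner_sub_left, inner_sub_right] at h
  linarith

lemma ContinuousLinearMap.inner_apply_self_sub_le (S T : E →L[ℝ] E) (x : E) :
    ⟪S x, x⟫ - ⟪T x, x⟫ ≤ ‖S - T‖ * ‖x‖ ^ 2 :=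
  calc ⟪S x, x⟫ - ⟪T x, x⟫ = ⟪(S - T) x, x⟫ := by rw [sub_apply, inner_sub_left]
    _ ≤ ‖(S - T) x‖ * ‖x‖ := real_inner_le_norm _ _
    _ ≤ ‖S - T‖ * ‖x‖ * ‖x‖ := by gcongr; exact le_opNorm _ _
    _ = ‖S - T‖ * ‖x‖ ^ 2 := by ring

variable {K : ℕ → ℝ} {B : ℕ → E →L[ℝ] E} {n : ℕ}

theorem half_sum_mul_sub_inner_self_le (φ : ℕ → E) (hn : 1 ≤ n) (hK : 0 ≤ K 1)
    (hKmono : ∀ j, 1 ≤ j → j < n → K j ≤ K (j + 1))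
    (hB : ∀ j ≤ n, (B j : E →ₗ[ℝ] E).IsPositive) :
    (1 / 2) * ∑ j ∈ Icc 1 n, K j * (⟪B j (φ j), φ j⟫ - ⟪B (j - 1) (φ (j - 1)), φ (j - 1)⟫)
      ≤ ∑ j ∈ Icc 1 n, K j * (⟪B j (φ j), φ n⟫ - ⟪B (j - 1) (φ (j - 1)), φ n⟫)
        - (1 / 2) * ∑ j ∈ Icc 1 n, K j * (⟪B j (φ n), φ n⟫ - ⟪B (j - 1) (φ n), φ n⟫) := by
  set f : ℕ → ℝ := fun i => ⟪B i (φ i), φ i⟫ + ⟪B i (φ n), φ n⟫ - 2 * ⟪B i (φ i), φ n⟫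
  have hf : ∀ i < n, 0 ≤ f i := fun i hi => by
    have := (hB i hi.le).two_mul_inner_le (φ i) (φ n)
    simp only [ContinuousLinearMap.coe_coe] at this
    simp only [f]
    linarith
  have hsum := sum_Icc_mul_sub_le K f hn hK hKmono hf
  have hfn : f n = 0 := by simp only [f]; ring
  have hexpand : ∑ j ∈ Icc 1 n, K j * (f j - f (j - 1))
      = ∑ j ∈ Icc 1 n, K j * (⟪B j (φ j), φ j⟫ - ⟪B (j - 1) (φ (j - 1)), φ (j - 1)⟫)
        + ∑ j ∈ Icc 1 n, K j * (⟪B j (φ n), φ n⟫ - ⟪B (j - 1) (φ n), φ n⟫)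
        - 2 * ∑ j ∈ Icc 1 n, K j * (⟪B j (φ j), φ n⟫ - ⟪B (j - 1) (φ (j - 1)), φ n⟫) := by
    rw [mul_sum, ← sum_add_distrib, ← sum_sub_distrib]
    exact sum_congr rfl fun j _ => by simp only [f]; ring
  rw [hexpand, hfn, mul_zero] at hsum
  linarith

lemma neg_sum_mul_inner_sub_le {t : ℕ → ℝ} {L : ℝ} (hK : ∀ j ∈ Icc 1 n, 0 ≤ K j)
    (hLip : ∀ j ∈ Icc 1 n, ‖B j - B (j - 1)‖ ≤ L * (t j - t (j - 1))) (x : E) :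
    -∑ j ∈ Icc 1 n, K j * (⟪B j x, x⟫ - ⟪B (j - 1) x, x⟫)
      ≤ L * ‖x‖ ^ 2 * ∑ j ∈ Icc 1 n, K j * (t j - t (j - 1)) := by
  rw [← sum_neg_distrib, mul_sum]
  refine sum_le_sum fun j hj => ?_
  calc -(K j * (⟪B j x, x⟫ - ⟪B (j - 1) x, x⟫))
      = K j * (⟪B (j - 1) x, x⟫ - ⟪B j x, x⟫) := by ring
    _ ≤ K j * (‖B j - B (j - 1)‖ * ‖x‖ ^ 2) := by
      rw [← norm_neg, neg_sub]
      exact mul_le_mul_of_nonneg_left (ContinuousLinearMap.inner_apply_self_sub_le _ _ x) (hK j hj)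
    _ ≤ K j * (L * (t j - t (j - 1)) * ‖x‖ ^ 2) := by gcongr; exacts [hK j hj, hLip j hj]
    _ = L * ‖x‖ ^ 2 * (K j * (t j - t (j - 1))) := by ring

end Operators

theorem discrete_caputo_pollution_estimate_general
    {H : Type*} [NormedAddCommGroup H] [InnerProductSpace ℝ H]
    (α : ℝ) (N : ℕ) (t : ℕ → ℝ)
    (hα0 : 0 < α) (hα1 : α < 1)
    (ht0 : t 0 = 0)
    (hmono : ∀ j, j < N → t j < t (j + 1))
    (B : ℕ → H →L[ℝ] H) (β₀ L_B : ℝ)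
    (hβ₀ : 0 < β₀) (hLB : 0 < L_B)
    (hBsym : ∀ j, j ≤ N → ∀ x y : H, (inner ℝ (B j x) y : ℝ) = inner ℝ x (B j y))
    (hBlow : ∀ j, j ≤ N → ∀ x : H, β₀ * ‖x‖ ^ 2 ≤ (inner ℝ (B j x) x : ℝ))
    (hLip : ∀ j, 1 ≤ j → j ≤ N → ‖B j - B (j - 1)‖ ≤ L_B * (t j - t (j - 1)))
    (φ : ℕ → H) :
    ∀ n, 1 ≤ n → n ≤ N →
      (1 / 2) * ∑ j ∈ Finset.Icc 1 n,
          Kd α t n j * ((inner ℝ (B j (φ j)) (φ j) : ℝ)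
            - (inner ℝ (B (j - 1) (φ (j - 1))) (φ (j - 1)) : ℝ))
        ≤ (inner ℝ (∑ j ∈ Finset.Icc 1 n,
              Kd α t n j • (B j (φ j) - B (j - 1) (φ (j - 1)))) (φ n) : ℝ)
          + (L_B * t n ^ ((1 : ℝ) - α) / (2 * β₀ * Real.Gamma (2 - α))) *
              (inner ℝ (B n (φ n)) (φ n) : ℝ) := by
  intro n hn hnN
  have ht : StrictMonoOn t (Set.Iic n) := strictMonoOn_Iic_of_lt_succ fun m hm => hmono m (by omega)
  have hK : ∀ j ∈ Icc 1 n, 0 ≤ Kd α t n j := fun j hj =>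
    Kd_nonneg hα1.le ht (mem_Icc.1 hj).1 (mem_Icc.1 hj).2
  have hB : ∀ j ≤ n, (B j : H →ₗ[ℝ] H).IsPositive := fun j hj =>
    (LinearMap.isPositive_iff _).2 ⟨hBsym j (hj.trans hnN),
      fun x => (by positivity : 0 ≤ β₀ * ‖x‖ ^ 2).trans (hBlow j (hj.trans hnN) x)⟩
  have hproduct := half_sum_mul_sub_inner_self_le φ hn (hK 1 (by simp [hn]))
    (fun j hj hjn => Kd_le_Kd_succ hα0.le hα1.le ht hj hjn) hB
  have hpollution := neg_sum_mul_inner_sub_le hK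
    (fun j hj => hLip j (mem_Icc.1 hj).1 ((mem_Icc.1 hj).2.trans hnN)) (φ n)
  rw [sum_Kd_mul_sub ht, ht0, sub_zero, kker_zero (by linarith), sub_zero] at hpollution
  have htn : 0 ≤ t n := ht0 ▸ ht.monotoneOn (by simp) (by simp) (Nat.zero_le n)
  have hcoef : L_B * ‖φ n‖ ^ 2 * kker (2 - α) (t n)
      ≤ 2 * ((L_B * t n ^ ((1 : ℝ) - α) / (2 * β₀ * Real.Gamma (2 - α))) *
        (inner ℝ (B n (φ n)) (φ n) : ℝ)) := by
    have hΓ : 0 < Real.Gamma (2 - α) := Real.Gamma_pos_of_pos (by linarith)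
    calc L_B * ‖φ n‖ ^ 2 * kker (2 - α) (t n)
        = 2 * ((L_B * t n ^ ((1 : ℝ) - α) / (2 * β₀ * Real.Gamma (2 - α))) *
          (β₀ * ‖φ n‖ ^ 2)) := by
          rw [kker, show 2 - α - 1 = 1 - α by ring]
          field_simp
      _ ≤ _ := by gcongr; exact hBlow n hnN (φ n)
  rw [sum_inner]
  simp only [real_inner_smul_left, inner_sub_left]
  linarith

/-- Lemma 3.1, third estimate (pollution term): under the hypotheses of the weighted
estimate and the Lipschitz condition `‖B_j - B_{j-1}‖ ≤ L_B Δt_j`, for `1 ≤ n ≤ N`: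
`(1/2) D^α_{t_n} ⟨B_n φ^n, φ^n⟩ ≤ ⟨D^α_{t_n}(B_n φ^n), φ^n⟩
  + (L_B t_n^{1-α}/(2 β₀ Γ(2-α))) ⟨B_n φ^n, φ^n⟩`. -/
theorem discrete_caputo_pollution_estimate
    {H : Type*} [NormedAddCommGroup H] [InnerProductSpace ℝ H] [CompleteSpace H]
    (α T : ℝ) (N : ℕ) (t : ℕ → ℝ)
    (hα0 : 0 < α) (hα1 : α < 1) (hT : 0 < T)
    (ht0 : t 0 = 0) (htN : t N = T)
    (hmono : ∀ j, j < N → t j < t (j + 1))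
    (B : ℕ → H →L[ℝ] H) (β₀ γ₀ L_B : ℝ)
    (hβ₀ : 0 < β₀) (hβγ : β₀ ≤ γ₀) (hLB : 0 < L_B)
    (hBsym : ∀ j, j ≤ N → ∀ x y : H, (inner ℝ (B j x) y : ℝ) = inner ℝ x (B j y))
    (hBlow : ∀ j, j ≤ N → ∀ x : H, β₀ * ‖x‖ ^ 2 ≤ (inner ℝ (B j x) x : ℝ))
    (hBup : ∀ j, j ≤ N → ∀ x : H, (inner ℝ (B j x) x : ℝ) ≤ γ₀ * ‖x‖ ^ 2)
    (hLip : ∀ j, 1 ≤ j → j ≤ N → ‖B j - B (j - 1)‖ ≤ L_B * (t j - t (j - 1)))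
    (φ : ℕ → H) :
    ∀ n, 1 ≤ n → n ≤ N →
      (1 / 2) * ∑ j ∈ Finset.Icc 1 n,
          Kd α t n j * ((inner ℝ (B j (φ j)) (φ j) : ℝ)
            - (inner ℝ (B (j - 1) (φ (j - 1))) (φ (j - 1)) : ℝ))
        ≤ (inner ℝ (∑ j ∈ Finset.Icc 1 n,
              Kd α t n j • (B j (φ j) - B (j - 1) (φ (j - 1)))) (φ n) : ℝ)
          + (L_B * t n ^ ((1 : ℝ) - α) / (2 * β₀ * Real.Gamma (2 - α))) *
              (inner ℝ (B n (φ n)) (φ n) : ℝ) :=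
  discrete_caputo_pollution_estimate_general α N t hα0 hα1 ht0 hmono B β₀ L_B hβ₀ hLB hBsym hBlow
    hLip φ
end
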